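/- Assume there exists A ⊆ Fin m with v(A) ≥ w(A) + 1. Then the instance IT(v,w) is 2m·w([m])-balanced: for every ℓ ∈ {1,…,k−1}, v'_k(G) ≤ 2m·w([m]) · max_T (v'_ℓ(T) − v'_{ℓ+1}(T)), where G is the entire ground set and the max is over all subsets T of the ground set. (In particular, v'_k(G) ≤ 2km·w([m]) and max_T (v'_ℓ(T) − v'_{ℓ+1}(T)) ≥ k+ℓ.) -/

import Mathlib

open Finset

/-- The `i`-th coordinate of a subset of the ground set consisting of `k−1`
disjoint copies of `Fin m`: the part of `S` inside copy `M_i`, viewed as a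
subset of `Fin m`. (Copies are indexed `0,…,k−2`, copy `i` being `M_{i+1}`.) -/
def copyPart (m k : ℕ) (S : Finset (Fin (k - 1) × Fin m)) (i : Fin (k - 1)) :
    Finset (Fin m) :=
  (S.filter (fun p => p.1 = i)).image Prod.snd

/-- The scaled disjoint union `v_ℓ(S) = Σ_{i≥ℓ} (k+i)·v(S_i) + Σ_{i<ℓ} (k+i)·w(S_i)`
(indices `i ∈ {1,…,k−1}`, here represented by `Fin (k-1)` shifted by one). -/
def scaledDU (m k : ℕ) (v w : Finset (Fin m) → ℕ) (ℓ : ℕ)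
    (S : Finset (Fin (k - 1) × Fin m)) : ℕ :=
  ∑ i : Fin (k - 1), (k + (i : ℕ) + 1) *
    (if ℓ ≤ (i : ℕ) + 1 then v (copyPart m k S i) else w (copyPart m k S i))

/-- Item truncation at `y` of a set function: `u'(S) = max_{T ⊆ S, |T| ≤ y} u(T)`. -/
def itemTrunc {α : Type*} (y : ℕ) (u : Finset α → ℕ) (S : Finset α) : ℕ :=
  (S.powerset.filter (fun T => T.card ≤ y)).sup u

/-- `v'_ℓ`, the `ℓ`-th function of the instance `IT(v,w)`: the item truncation
at `m` of the scaled disjoint union `v_ℓ`. -/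
def ITfun (m k : ℕ) (v w : Finset (Fin m) → ℕ) (ℓ : ℕ)
    (S : Finset (Fin (k - 1) × Fin m)) : ℕ :=
  itemTrunc m (scaledDU m k v w ℓ) S

/-! At level `k` every copy is valued by `w`, and a set of at most `m` items meets at most `m`
copies, each worth at most `2k·w([m])`; hence `v'_k(G) ≤ 2km·w([m])`. Conversely, a set `A` with
`v(A) > w(A)` placed in copy `ℓ` has `v_ℓ - v_{ℓ+1} = (k+ℓ)(v(A) - w(A)) ≥ k+ℓ`, and truncation at `m`
neither lowers `v'_ℓ` there nor, as `w` is monotone, raises `v'_{ℓ+1}`. -/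

section

variable {m k : ℕ} {v w : Finset (Fin m) → ℕ}

lemma itemTrunc_le {α : Type*} {y : ℕ} {u : Finset α → ℕ} {S : Finset α} {c : ℕ}
    (h : ∀ T ⊆ S, T.card ≤ y → u T ≤ c) : itemTrunc y u S ≤ c :=
  Finset.sup_le fun T hT => by
    rw [mem_filter, mem_powerset] at hT
    exact h T hT.1 hT.2

lemma le_itemTrunc {α : Type*} {y : ℕ} {u : Finset α → ℕ} {S T : Finset α}
    (hTS : T ⊆ S) (hT : T.card ≤ y) : u T ≤ itemTrunc y u S :=
  Finset.le_sup (mem_filter.mpr ⟨mem_powerset.mpr hTS, hT⟩)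

lemma copyPart_mono {S T : Finset (Fin (k - 1) × Fin m)} (h : S ⊆ T) (i : Fin (k - 1)) :
    copyPart m k S i ⊆ copyPart m k T i :=
  image_subset_image (filter_subset_filter _ h)

lemma copyPart_eq_empty {T : Finset (Fin (k - 1) × Fin m)} {i : Fin (k - 1)}
    (hi : i ∉ T.image Prod.fst) : copyPart m k T i = ∅ := by
  rw [copyPart, image_eq_empty, filter_eq_empty_iff]
  exact fun p hp hpi => hi (mem_image.mpr ⟨p, hp, hpi⟩)

lemma copyPart_singleton_product (A : Finset (Fin m)) (j i : Fin (k - 1)) :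
    copyPart m k ({j} ×ˢ A) i = if i = j then A else ∅ := by
  ext a
  by_cases hij : i = j
  · simp [copyPart, hij]
  · simp [copyPart, hij, Ne.symm hij]

lemma scaledDU_add_eq (S : Finset (Fin (k - 1) × Fin m)) (j : Fin (k - 1)) :
    scaledDU m k v w (j + 1) S + (k + j + 1) * w (copyPart m k S j) =
      scaledDU m k v w (j + 1 + 1) S + (k + j + 1) * v (copyPart m k S j) := by
  unfold scaledDU
  rw [← add_sum_erase _ _ (mem_univ j), ← add_sum_erase _ _ (mem_univ j)]
  have hrest : ∀ i ∈ univ.erase j,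
      (k + (i : ℕ) + 1) * (if (j : ℕ) + 1 ≤ i + 1 then v (copyPart m k S i)
        else w (copyPart m k S i)) =
      (k + (i : ℕ) + 1) * (if (j : ℕ) + 1 + 1 ≤ i + 1 then v (copyPart m k S i)
        else w (copyPart m k S i)) := fun i hi => by
    have hij : (i : ℕ) ≠ j := Fin.val_ne_of_ne (ne_of_mem_erase hi)
    congr 1
    exact if_congr (by omega) rfl rfl
  rw [sum_congr rfl hrest, if_pos le_rfl, if_neg (by omega)]
  ring

lemma scaledDU_le_of_subset (hwmono : ∀ A B : Finset (Fin m), A ⊆ B → w A ≤ w B)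
    {ℓ : ℕ} {U T : Finset (Fin (k - 1) × Fin m)} (hUT : U ⊆ T)
    (heq : ∀ i : Fin (k - 1), ℓ ≤ (i : ℕ) + 1 → copyPart m k U i = copyPart m k T i) :
    scaledDU m k v w ℓ U ≤ scaledDU m k v w ℓ T := by
  refine sum_le_sum fun i _ => Nat.mul_le_mul_left _ ?_
  split_ifs with hi
  · rw [heq i hi]
  · exact hwmono _ _ (copyPart_mono hUT i)

lemma scaledDU_top_le (hw0 : w ∅ = 0) (hwmono : ∀ A B : Finset (Fin m), A ⊆ B → w A ≤ w B)
    (T : Finset (Fin (k - 1) × Fin m)) :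
    scaledDU m k v w k T ≤ 2 * k * #(T.image Prod.fst) * w univ := by
  unfold scaledDU
  have hoff : ∀ i ∈ univ, i ∉ T.image Prod.fst → (k + (i : ℕ) + 1) *
      (if k ≤ (i : ℕ) + 1 then v (copyPart m k T i) else w (copyPart m k T i)) = 0 :=
    fun i _ hi => by rw [copyPart_eq_empty hi, if_neg (by omega), hw0, mul_zero]
  rw [← sum_subset (subset_univ _) hoff]
  calc _ ≤ ∑ _i ∈ T.image Prod.fst, 2 * k * w univ := sum_le_sum fun i _ => by
          rw [if_neg (by omega)]
          exact Nat.mul_le_mul (by omega) (hwmono _ _ (subset_univ _))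
    _ = _ := by rw [sum_const, smul_eq_mul]; ring

lemma ITfun_top_univ_le (hw0 : w ∅ = 0)
    (hwmono : ∀ A B : Finset (Fin m), A ⊆ B → w A ≤ w B) :
    ITfun m k v w k univ ≤ 2 * k * m * w univ :=
  itemTrunc_le fun T _ hT => (scaledDU_top_le hw0 hwmono T).trans <| by
    gcongr
    exact card_image_le.trans hT

lemma add_le_sup'_ITfun_sub (hwmono : ∀ A B : Finset (Fin m), A ⊆ B → w A ≤ w B)
    (hgap : ∃ A : Finset (Fin m), w A + 1 ≤ v A) {ℓ : ℕ} (hℓ : 1 ≤ ℓ) (hℓk : ℓ ≤ k - 1) :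
    (k + ℓ : ℤ) ≤ (univ : Finset (Fin (k - 1) × Fin m)).powerset.sup'
      ⟨∅, empty_mem_powerset _⟩ (fun T => (ITfun m k v w ℓ T : ℤ) - ITfun m k v w (ℓ + 1) T) := by
  obtain ⟨A, hA⟩ := hgap
  obtain ⟨j, rfl⟩ : ∃ j : Fin (k - 1), (j : ℕ) + 1 = ℓ := ⟨⟨ℓ - 1, by omega⟩, Nat.sub_add_cancel hℓ⟩
  set T : Finset (Fin (k - 1) × Fin m) := {j} ×ˢ A
  have hTpart : ∀ i, copyPart m k T i = if i = j then A else ∅ := copyPart_singleton_product A j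
  have hTcard : #T ≤ m := by
    simpa [T, card_product] using card_le_univ A
  have hlow : scaledDU m k v w (j + 1) T ≤ ITfun m k v w (j + 1) T :=
    le_itemTrunc subset_rfl hTcard
  have hhigh : ITfun m k v w (j + 1 + 1) T ≤ scaledDU m k v w (j + 1 + 1) T :=
    itemTrunc_le fun U hU _ => scaledDU_le_of_subset hwmono hU fun i hi => by
      have hij : i ≠ j := fun h => by subst h; omega
      have hUi := copyPart_mono hU i
      rw [hTpart, if_neg hij] at hUi ⊢
      exact subset_empty.mp hUi
  have hswitch := scaledDU_add_eq (v := v) (w := w) T j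
  rw [hTpart, if_pos rfl] at hswitch
  have hgapA := Nat.mul_le_mul_left (k + j + 1) hA
  refine le_sup'_of_le _ (mem_powerset.mpr (subset_univ T)) ?_
  zify at hlow hhigh hswitch hgapA ⊢
  linarith

end

theorem IT_balanced_general (m k : ℕ)
    (v w : Finset (Fin m) → ℕ)
    (hw0 : w ∅ = 0)
    (hwmono : ∀ A B : Finset (Fin m), A ⊆ B → w A ≤ w B)
    (hgap : ∃ A : Finset (Fin m), w A + 1 ≤ v A) :
    (∀ ℓ : ℕ, 1 ≤ ℓ → ℓ ≤ k - 1 →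
      (ITfun m k v w k (Finset.univ : Finset (Fin (k - 1) × Fin m)) : ℤ)
        ≤ (2 * m * w (Finset.univ : Finset (Fin m)) : ℤ) *
          ((Finset.univ : Finset (Fin (k - 1) × Fin m)).powerset.sup'
            ⟨∅, Finset.empty_mem_powerset _⟩
            (fun T => (ITfun m k v w ℓ T : ℤ) - ITfun m k v w (ℓ + 1) T))) ∧
    (ITfun m k v w k (Finset.univ : Finset (Fin (k - 1) × Fin m))
        ≤ 2 * k * m * w (Finset.univ : Finset (Fin m))) ∧
    (∀ ℓ : ℕ, 1 ≤ ℓ → ℓ ≤ k - 1 →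
      (k + ℓ : ℤ) ≤
        (Finset.univ : Finset (Fin (k - 1) × Fin m)).powerset.sup'
          ⟨∅, Finset.empty_mem_powerset _⟩
          (fun T => (ITfun m k v w ℓ T : ℤ) - ITfun m k v w (ℓ + 1) T)) := by
  have htop : ITfun m k v w k univ ≤ 2 * k * m * w univ := ITfun_top_univ_le hw0 hwmono
  have hgapℓ := fun ℓ (hℓ : 1 ≤ ℓ) (hℓk : ℓ ≤ k - 1) => add_le_sup'_ITfun_sub hwmono hgap hℓ hℓk
  refine ⟨fun ℓ hℓ hℓk => ?_, htop, hgapℓ⟩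
  calc (ITfun m k v w k univ : ℤ)
      ≤ (2 * m * w univ : ℤ) * (k + ℓ) := by
        have : (0 : ℤ) ≤ 2 * m * w univ * ℓ := by positivity
        zify at htop
        linarith
    _ ≤ _ := mul_le_mul_of_nonneg_left (hgapℓ ℓ hℓ hℓk) (by positivity)

/-- If some `A` has `v(A) ≥ w(A) + 1`, then `IT(v,w)` is `2m·w([m])`-balanced:
for every `ℓ ∈ {1,…,k−1}`,
`v'_k(G) ≤ 2m·w([m]) · max_T (v'_ℓ(T) − v'_{ℓ+1}(T))`, where `G` is the whole
ground set. In particular `v'_k(G) ≤ 2km·w([m])` and the max is `≥ k+ℓ`. -/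
theorem IT_balanced (m k : ℕ) (hk : 2 ≤ k)
    (v w : Finset (Fin m) → ℕ)
    (hv0 : v ∅ = 0) (hw0 : w ∅ = 0)
    (hvmono : ∀ A B : Finset (Fin m), A ⊆ B → v A ≤ v B)
    (hwmono : ∀ A B : Finset (Fin m), A ⊆ B → w A ≤ w B)
    (hgap : ∃ A : Finset (Fin m), w A + 1 ≤ v A) :
    (∀ ℓ : ℕ, 1 ≤ ℓ → ℓ ≤ k - 1 →
      (ITfun m k v w k (Finset.univ : Finset (Fin (k - 1) × Fin m)) : ℤ)
        ≤ (2 * m * w (Finset.univ : Finset (Fin m)) : ℤ) *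
          ((Finset.univ : Finset (Fin (k - 1) × Fin m)).powerset.sup'
            ⟨∅, Finset.empty_mem_powerset _⟩
            (fun T => (ITfun m k v w ℓ T : ℤ) - ITfun m k v w (ℓ + 1) T))) ∧
    (ITfun m k v w k (Finset.univ : Finset (Fin (k - 1) × Fin m))
        ≤ 2 * k * m * w (Finset.univ : Finset (Fin m))) ∧
    (∀ ℓ : ℕ, 1 ≤ ℓ → ℓ ≤ k - 1 →
      (k + ℓ : ℤ) ≤
        (Finset.univ : Finset (Fin (k - 1) × Fin m)).powerset.sup'
          ⟨∅, Finset.empty_mem_powerset _⟩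
          (fun T => (ITfun m k v w ℓ T : ℤ) - ITfun m k v w (ℓ + 1) T)) :=
  IT_balanced_general m k v w hw0 hwmono hgap
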